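/- arXiv:1401.7445 — 2 statements merged into one kernel-verified Lean document; each statement's English description precedes it below -/
import Mathlib

section
/- For every integer n, the signature (index) of the matrix A(n), viewed as a real symmetric matrix, is 0: counted with multiplicity, A(n) has exactly 5 positive eigenvalues and exactly 5 negative eigenvalues. -/
/-- The 10×10 symmetric integer matrix A(n): diagonal entries
(−2, 2, 2, 0, −6, n−6, 0, 2, 2, −2), entries 1 in (1-indexed) positions
(1,4), (2,3), (3,4), (4,5), (5,6), (6,7), (7,8), (7,10), (8,9) and their
transposes, all other entries 0. -/
def matA (n : ℤ) : Matrix (Fin 10) (Fin 10) ℤ :=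
  Matrix.of fun i j =>
    if i = j then ![-2, 2, 2, 0, -6, n - 6, 0, 2, 2, -2] i
    else if (min i j, max i j) ∈
        ([(0, 3), (1, 2), (2, 3), (3, 4), (4, 5), (5, 6), (6, 7), (6, 9), (7, 8)] :
          List (Fin 10 × Fin 10)) then 1
    else 0

/-!
A real symmetric matrix has at least `k` positive eigenvalues as soon as its quadratic form is
positive definite on some `k`-dimensional subspace `W`: otherwise `W` meets the span of the
eigenvectors with eigenvalues `≤ 0` nontrivially, where the form is `≤ 0`. For `A(n)` there are
explicit integer families of five `A(n)`-orthogonal vectors whose Gram matrices are diagonal with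
positive, respectively negative, entries. So `A(n)` has at least five eigenvalues of each sign,
hence exactly five of each.
-/

open Matrix Finset

namespace Matrix.IsHermitian

variable {ι κ : Type*} [Fintype ι] [DecidableEq ι] [Fintype κ] {M : Matrix ι ι ℝ}

theorem dotProduct_mulVec_eq_sum_eigenvalues (hM : M.IsHermitian) (x : ι → ℝ) :
    x ⬝ᵥ (M *ᵥ x) =
      ∑ i, hM.eigenvalues i * ((hM.eigenvectorUnitary : Matrix ι ι ℝ)ᵀ *ᵥ x) i ^ 2 := by
  conv_lhs => rw [hM.spectral_theorem, Unitary.conjStarAlgAut_apply]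
  rw [← mulVec_mulVec, ← mulVec_mulVec, dotProduct_mulVec, ← mulVec_transpose,
    star_eq_conjTranspose, conjTranspose_eq_transpose_of_trivial, dotProduct]
  refine sum_congr rfl fun i _ => ?_
  rw [mulVec_diagonal, Function.comp_apply, RCLike.ofReal_real_eq_id, id]
  ring

theorem card_le_card_filter_pos_mul_eigenvalues (hM : M.IsHermitian) (ε : ℝ) {V : Matrix ι κ ℝ}
    (hV : (ε • (Vᵀ * M * V)).PosDef) :
    Fintype.card κ ≤ #{i | 0 < ε * hM.eigenvalues i} := by
  set S : Finset ι := {i | 0 < ε * hM.eigenvalues i}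
  set W : Matrix ι κ ℝ := (hM.eigenvectorUnitary : Matrix ι ι ℝ)ᵀ * V with hW
  -- `c ↦` the coordinates of `V c` along the eigenvectors with `0 < ε * λᵢ`
  let ψ : (κ → ℝ) →ₗ[ℝ] (S → ℝ) := LinearMap.funLeft ℝ ℝ Subtype.val ∘ₗ W.mulVecLin
  by_contra! hlt
  obtain ⟨c, hc, hc0⟩ := Submodule.exists_mem_ne_zero_of_ne_bot
    (ψ.ker_ne_bot_of_finrank_lt (by simpa using hlt))
  have hWc : ∀ i ∈ S, (W *ᵥ c) i = 0 := fun i hi => congrFun (LinearMap.mem_ker.mp hc) ⟨i, hi⟩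
  have hpos : 0 < ε * ((V *ᵥ c) ⬝ᵥ (M *ᵥ (V *ᵥ c))) := by
    simpa [smul_mulVec, ← mulVec_mulVec, dotProduct_mulVec, ← mulVec_transpose] using
      hV.dotProduct_mulVec_pos hc0
  have hnonpos : ε * ((V *ᵥ c) ⬝ᵥ (M *ᵥ (V *ᵥ c))) ≤ 0 := by
    rw [hM.dotProduct_mulVec_eq_sum_eigenvalues, mul_sum, mulVec_mulVec, ← hW]
    refine sum_nonpos fun i _ => ?_
    by_cases hi : i ∈ S
    · simp [hWc i hi]
    · rw [← mul_assoc]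
      exact mul_nonpos_of_nonpos_of_nonneg (by simpa [S] using hi) (sq_nonneg _)
  exact hpos.not_ge hnonpos

theorem card_le_card_filter_eigenvalues_pos (hM : M.IsHermitian) {V : Matrix ι κ ℝ}
    (hV : (Vᵀ * M * V).PosDef) :
    Fintype.card κ ≤ #{i | 0 < hM.eigenvalues i} := by
  simpa using hM.card_le_card_filter_pos_mul_eigenvalues 1 (by simpa using hV)

theorem card_le_card_filter_eigenvalues_neg (hM : M.IsHermitian) {V : Matrix ι κ ℝ}
    (hV : (-(Vᵀ * M * V)).PosDef) :
    Fintype.card κ ≤ #{i | hM.eigenvalues i < 0} := by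
  simpa using hM.card_le_card_filter_pos_mul_eigenvalues (-1) (by simpa using hV)

end Matrix.IsHermitian

theorem Matrix.transpose_mul_mul_map_intCast {ι κ R : Type*} [Fintype ι] [Ring R]
    (A : Matrix ι ι ℤ) (V : Matrix ι κ ℤ) :
    (V.map (Int.cast : ℤ → R))ᵀ * A.map (Int.cast : ℤ → R) * V.map (Int.cast : ℤ → R) =
      (Vᵀ * A * V).map Int.cast := by
  ext i j
  simp [mul_apply, sum_mul]

theorem matA_eq (n : ℤ) : matA n =
    !![-2, 0, 0, 1,  0,     0, 0, 0, 0,  0;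
        0, 2, 1, 0,  0,     0, 0, 0, 0,  0;
        0, 1, 2, 1,  0,     0, 0, 0, 0,  0;
        1, 0, 1, 0,  1,     0, 0, 0, 0,  0;
        0, 0, 0, 1, -6,     1, 0, 0, 0,  0;
        0, 0, 0, 0,  1, n - 6, 1, 0, 0,  0;
        0, 0, 0, 0,  0,     1, 0, 1, 0,  1;
        0, 0, 0, 0,  0,     0, 1, 2, 1,  0;
        0, 0, 0, 0,  0,     0, 0, 1, 2,  0;
        0, 0, 0, 0,  0,     0, 1, 0, 0, -2] := by
  ext i j
  fin_cases i <;> fin_cases j <;> rfl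

def posFrame (n : ℤ) : Matrix (Fin 10) (Fin 5) ℤ :=
  !![0, 1, 0, 0, 0, 0, 0, 0, 0, 0;
     0, -1, 2, 0, 0, 0, 0, 0, 0, 0;
     0, 0, 0, 0, 0, 0, 0, 1, 0, 0;
     3, 2, -4, 6, 1, 0, -1, 0, 1, 0;
     3 * (7 - n), 2 * (7 - n), -4 * (7 - n), 6 * (7 - n), 7 - n, 2, 0, 0, 0, 0]ᵀ

def negFrame (n : ℤ) : Matrix (Fin 10) (Fin 5) ℤ :=
  !![1, 0, 0, 0, 0, 0, 0, 0, 0, 0;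
     3, 2, -4, 6, 0, 0, 0, 0, 0, 0;
     -6, -4, 8, -12, -2, 0, 2, -1, 0, 0;
     -9, -6, 12, -18, -3, 0, 3, -2, 1, 2;
     3 * (5 - n), 2 * (5 - n), -4 * (5 - n), 6 * (5 - n), 5 - n, 2, 0, 0, 0, 0]ᵀ

theorem posFrame_transpose_mul_matA_mul (n : ℤ) :
    (posFrame n)ᵀ * matA n * posFrame n = diagonal ![2, 6, 2, 2, 4] := by
  rw [matA_eq, posFrame, transpose_transpose]
  ext i j
  simp only [mul_apply, Fin.sum_univ_succ, Fin.sum_univ_zero, transpose_apply, of_apply, cons_val',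
    cons_val_zero, cons_val_succ, cons_val_fin_one, mul_zero, add_zero, zero_add, mul_one]
  fin_cases i <;> fin_cases j <;> simp <;> ring

theorem negFrame_transpose_mul_matA_mul (n : ℤ) :
    (negFrame n)ᵀ * matA n * negFrame n = diagonal ![-2, -6, -2, -2, -4] := by
  rw [matA_eq, negFrame, transpose_transpose]
  ext i j
  simp only [mul_apply, Fin.sum_univ_succ, Fin.sum_univ_zero, transpose_apply, of_apply, cons_val',
    cons_val_zero, cons_val_succ, cons_val_fin_one, mul_zero, add_zero, zero_add, mul_one]
  fin_cases i <;> fin_cases j <;> simp <;> ring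

/-- For every integer n, the real symmetric matrix A(n) has exactly 5 positive
and exactly 5 negative eigenvalues (counted with multiplicity), so its
signature (index) is 0. -/
theorem matA_signature_zero (n : ℤ)
    (hA : ((matA n).map (Int.cast : ℤ → ℝ)).IsHermitian) :
    (Finset.univ.filter fun i => 0 < hA.eigenvalues i).card = 5 ∧
    (Finset.univ.filter fun i => hA.eigenvalues i < 0).card = 5 := by
  have hpos : 5 ≤ #{i | 0 < hA.eigenvalues i} := by
    refine hA.card_le_card_filter_eigenvalues_pos (V := (posFrame n).map Int.cast) ?_
    rw [transpose_mul_mul_map_intCast, posFrame_transpose_mul_matA_mul, diagonal_map (by simp),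
      posDef_diagonal_iff]
    simp [Fin.forall_fin_succ]
  have hneg : 5 ≤ #{i | hA.eigenvalues i < 0} := by
    refine hA.card_le_card_filter_eigenvalues_neg (V := (negFrame n).map Int.cast) ?_
    rw [transpose_mul_mul_map_intCast, negFrame_transpose_mul_matA_mul, diagonal_map (by simp),
      diagonal_neg, posDef_diagonal_iff]
    simp [Fin.forall_fin_succ]
  have htotal : #{i | 0 < hA.eigenvalues i} + #{i | hA.eigenvalues i < 0} ≤ 10 := by
    rw [← card_union_of_disjoint (disjoint_filter.2 fun i _ h => h.not_gt)]
    exact card_le_univ _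
  constructor <;> omega
end

section
/- For every integer n, the signature (index) of the matrix B(n), viewed as a real symmetric matrix, is 8: counted with multiplicity, B(n) has exactly 11 positive eigenvalues and exactly 3 negative eigenvalues. -/
/-!
By Sylvester's law of inertia, the numbers of positive and negative eigenvalues of a real
symmetric matrix can be read off from any congruence `A = Pᵀ * diagonal d * P` with `P`
invertible. The parameter `n` only enters through the diagonal entry at index `9` (indices run
from `0`, as in `Fin 14`). The vector `k = (3, -2, 4, -6, 5, -4, 3, -2, 1, 0, 0, 0, 0, 0)`, a
signed null root of the affine `E₈` diagram formed by the first nine indices, satisfies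
`B(n) k = e₉` and `k₉ = 0`, so the transvection `e₉ ↦ e₉ + (n / 2) k` is a congruence from
`B(0)` to `B(n)`. An explicit triangular factorisation of `B(0)` with diagonal
`(-6, 6, …, 6, -1, 1, 3, -3) / 6` then exhibits `11` positive and `3` negative entries.
-/

/-- The 14×14 symmetric integer matrix B(n): diagonal entries
(2, 2, 2, 2, 2, 2, 2, 2, 2, n−5, 0, 2, 2, −2), entries 1 in (1-indexed) positions
(1,4), (2,3), (3,4), (4,5), (5,6), (6,7), (7,8), (8,9), (9,10), (10,11), (11,12),
(11,14), (12,13) and their transposes, all other entries 0. -/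
def matB (n : ℤ) : Matrix (Fin 14) (Fin 14) ℤ :=
  Matrix.of fun i j =>
    if i = j then ![2, 2, 2, 2, 2, 2, 2, 2, 2, n - 5, 0, 2, 2, -2] i
    else if (min i j, max i j) ∈
        ([(0, 3), (1, 2), (2, 3), (3, 4), (4, 5), (5, 6), (6, 7), (7, 8), (8, 9),
          (9, 10), (10, 11), (10, 13), (11, 12)] :
          List (Fin 14 × Fin 14)) then 1
    else 0

open Matrix Finset

section Congruence

variable {ι : Type*} [Fintype ι] [DecidableEq ι]

theorem Matrix.dotProduct_mulVec_transpose_mul_diagonal_mul {R : Type*} [CommSemiring R]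
    (P : Matrix ι ι R) (d x : ι → R) :
    x ⬝ᵥ (Pᵀ * diagonal d * P) *ᵥ x = ∑ i, d i * (P *ᵥ x) i ^ 2 := by
  rw [← mulVec_mulVec, ← mulVec_mulVec, dotProduct_mulVec, vecMul_transpose]
  simp only [dotProduct, mulVec_diagonal]
  exact Finset.sum_congr rfl fun i _ => by ring

section Inertia

variable {𝕜 : Type*} [Field 𝕜] [LinearOrder 𝕜] [IsStrictOrderedRing 𝕜]

theorem Matrix.card_pos_le_of_transpose_mul_diagonal_mul_eq {P Q : Matrix ι ι 𝕜} {d e : ι → 𝕜}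
    (hP : IsUnit P) (h : Pᵀ * diagonal d * P = Qᵀ * diagonal e * Q) :
    #{i | 0 < d i} ≤ #{i | 0 < e i} := by
  by_contra! hlt
  -- A nonzero `x` with `P x` supported where `d > 0` and `Q x` supported where `e ≤ 0` exists
  -- by counting dimensions; the quadratic form of `h` is then both positive and nonpositive at `x`.
  let Φ : (ι → 𝕜) →ₗ[𝕜] ({i // ¬0 < d i} ⊕ {i // 0 < e i} → 𝕜) :=
    LinearMap.pi (Sum.elim (fun i => LinearMap.proj i.1 ∘ₗ P.mulVecLin)
      (fun i => LinearMap.proj i.1 ∘ₗ Q.mulVecLin))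
  have hdim : Module.finrank 𝕜 ({i // ¬0 < d i} ⊕ {i // 0 < e i} → 𝕜) <
      Module.finrank 𝕜 (ι → 𝕜) := by
    have := card_filter_add_card_filter_not (s := univ) (fun i => 0 < d i)
    simp only [Module.finrank_fintype_fun_eq_card, Fintype.card_sum, Fintype.card_subtype,
      card_univ] at this ⊢
    omega
  obtain ⟨x, hx, hx0⟩ :=
    Submodule.exists_mem_ne_zero_of_ne_bot (LinearMap.ker_ne_bot_of_finrank_lt hdim)
  have hPx : ∀ i, ¬0 < d i → (P *ᵥ x) i = 0 := fun i hi => by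
    simpa [Φ] using congrFun ((LinearMap.mem_ker (f := Φ)).mp hx) (Sum.inl ⟨i, hi⟩)
  have hQx : ∀ i, 0 < e i → (Q *ᵥ x) i = 0 := fun i hi => by
    simpa [Φ] using congrFun ((LinearMap.mem_ker (f := Φ)).mp hx) (Sum.inr ⟨i, hi⟩)
  obtain ⟨j, hj⟩ : ∃ j, (P *ᵥ x) j ≠ 0 := by
    by_contra! h0
    exact hx0 ((mulVec_injective_iff_isUnit.mpr hP) (by simpa [funext_iff] using h0))
  have hpos : 0 < x ⬝ᵥ (Pᵀ * diagonal d * P) *ᵥ x := by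
    rw [dotProduct_mulVec_transpose_mul_diagonal_mul]
    have hdj : 0 < d j := by by_contra h'; exact hj (hPx j h')
    refine sum_pos' (fun i _ => ?_) ⟨j, mem_univ j, by positivity⟩
    by_cases hi : 0 < d i
    · positivity
    · simp [hPx i hi]
  have hnonpos : x ⬝ᵥ (Qᵀ * diagonal e * Q) *ᵥ x ≤ 0 := by
    rw [dotProduct_mulVec_transpose_mul_diagonal_mul]
    refine sum_nonpos fun i _ => ?_
    by_cases hi : 0 < e i
    · simp [hQx i hi]
    · exact mul_nonpos_of_nonpos_of_nonneg (not_lt.mp hi) (sq_nonneg _)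
  rw [h] at hpos
  exact hnonpos.not_gt hpos

theorem Matrix.card_pos_eq_of_transpose_mul_diagonal_mul_eq {P Q : Matrix ι ι 𝕜} {d e : ι → 𝕜}
    (hP : IsUnit P) (hQ : IsUnit Q) (h : Pᵀ * diagonal d * P = Qᵀ * diagonal e * Q) :
    #{i | 0 < d i} = #{i | 0 < e i} :=
  (card_pos_le_of_transpose_mul_diagonal_mul_eq hP h).antisymm
    (card_pos_le_of_transpose_mul_diagonal_mul_eq hQ h.symm)

theorem Matrix.card_neg_eq_of_transpose_mul_diagonal_mul_eq {P Q : Matrix ι ι 𝕜} {d e : ι → 𝕜}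
    (hP : IsUnit P) (hQ : IsUnit Q) (h : Pᵀ * diagonal d * P = Qᵀ * diagonal e * Q) :
    #{i | d i < 0} = #{i | e i < 0} := by
  have hneg : Pᵀ * diagonal (fun i => -d i) * P = Qᵀ * diagonal (fun i => -e i) * Q := by
    rw [← diagonal_neg, ← diagonal_neg, Matrix.mul_neg, Matrix.neg_mul, h, Matrix.mul_neg,
      Matrix.neg_mul]
  simpa using card_pos_eq_of_transpose_mul_diagonal_mul_eq hP hQ hneg

end Inertia

theorem Matrix.IsHermitian.exists_isUnit_eq_transpose_mul_diagonal_eigenvalues_mul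
    {A : Matrix ι ι ℝ} (hA : A.IsHermitian) :
    ∃ P : Matrix ι ι ℝ, IsUnit P ∧ A = Pᵀ * diagonal hA.eigenvalues * P := by
  let U : Matrix ι ι ℝ := hA.eigenvectorUnitary
  refine ⟨Uᵀ, IsUnit.of_mul_eq_one U ?_, ?_⟩
  · rw [← conjTranspose_eq_transpose_of_trivial]
    exact Unitary.coe_star_mul_self hA.eigenvectorUnitary
  · conv_lhs => rw [hA.spectral_theorem]
    simp [U, star_eq_conjTranspose, conjTranspose_eq_transpose_of_trivial]

theorem Matrix.IsHermitian.card_eigenvalues_pos_eq {A P : Matrix ι ι ℝ} (hA : A.IsHermitian)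
    {d : ι → ℝ} (hP : IsUnit P) (h : A = Pᵀ * diagonal d * P) :
    #{i | 0 < hA.eigenvalues i} = #{i | 0 < d i} := by
  obtain ⟨U, hU, hAU⟩ := hA.exists_isUnit_eq_transpose_mul_diagonal_eigenvalues_mul
  exact card_pos_eq_of_transpose_mul_diagonal_mul_eq hU hP (hAU.symm.trans h)

theorem Matrix.IsHermitian.card_eigenvalues_neg_eq {A P : Matrix ι ι ℝ} (hA : A.IsHermitian)
    {d : ι → ℝ} (hP : IsUnit P) (h : A = Pᵀ * diagonal d * P) :
    #{i | hA.eigenvalues i < 0} = #{i | d i < 0} := by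
  obtain ⟨U, hU, hAU⟩ := hA.exists_isUnit_eq_transpose_mul_diagonal_eigenvalues_mul
  exact card_neg_eq_of_transpose_mul_diagonal_mul_eq hU hP (hAU.symm.trans h)

theorem Matrix.transpose_mul_mul_one_add_smul_vecMulVec {R : Type*} [CommRing R]
    {B : Matrix ι ι R} (hB : Bᵀ = B) {k u : ι → R} {c : R} (hk : B *ᵥ k = c • u)
    (huk : u ⬝ᵥ k = 0) (α : R) :
    (1 + α • vecMulVec k u)ᵀ * B * (1 + α • vecMulVec k u) = B + (2 * α * c) • vecMulVec u u := by
  have hBV : B * vecMulVec k u = c • vecMulVec u u := by rw [mul_vecMulVec, hk, smul_vecMulVec]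
  have hVB : (vecMulVec k u)ᵀ * B = c • vecMulVec u u := by
    rw [transpose_vecMulVec, vecMulVec_mul, ← mulVec_transpose, hB, hk, vecMulVec_smul]
  have hUV : vecMulVec u u * vecMulVec k u = 0 := by
    rw [vecMulVec_mul_vecMulVec, huk, zero_smul, vecMulVec_zero]
  rw [transpose_add, transpose_one, transpose_smul, Matrix.add_mul, Matrix.one_mul,
    Matrix.smul_mul, hVB, Matrix.mul_add, Matrix.mul_one, Matrix.add_mul, Matrix.mul_smul, hBV,
    Matrix.smul_mul, Matrix.smul_mul, Matrix.mul_smul, hUV]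
  module

theorem Matrix.isUnit_one_add_smul_vecMulVec {R : Type*} [CommRing R] {k u : ι → R}
    (huk : u ⬝ᵥ k = 0) (α : R) : IsUnit (1 + α • vecMulVec k u) := by
  refine IsUnit.of_mul_eq_one (1 - α • vecMulVec k u) ?_
  simp only [Matrix.add_mul, Matrix.mul_sub, Matrix.one_mul, Matrix.mul_one, Matrix.smul_mul,
    Matrix.mul_smul, vecMulVec_mul_vecMulVec, huk, zero_smul, vecMulVec_zero, smul_zero, add_zero,
    add_sub_cancel_right]

end Congruence

def matBCongr : Matrix (Fin 14) (Fin 14) ℤ :=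
  !![1, 0, 0, 0, 0, 0, 0, 0, 0, 0, 0, 0, 0, 0;
    1, 1, 0, 0, 0, 0, 0, 0, 0, 0, 0, 0, 0, 0;
    -1, 1, 1, 0, 0, 0, 0, 0, 0, 0, 0, 0, 0, 0;
    1, 0, 1, 1, 0, 0, 0, 0, 0, 0, 0, 0, 0, 0;
    0, 0, 0, 1, 1, 0, 0, 0, 0, 0, 0, 0, 0, 0;
    0, 0, 0, 0, 1, 1, 0, 0, 0, 0, 0, 0, 0, 0;
    0, 0, 0, 0, 0, 1, 1, 0, 0, 0, 0, 0, 0, 0;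
    0, 0, 0, 0, 0, 0, 1, 1, 0, 0, 0, 0, 0, 0;
    0, 0, 0, 0, 0, 0, 0, 1, 1, 0, 0, 0, 0, 0;
    0, 0, 0, 0, 0, 0, 0, 0, 1, 1, 0, 0, 0, 0;
    0, 0, 0, 0, 0, 0, 0, 0, 0, -6, 1, 0, 0, 0;
    0, 0, 0, 0, 0, 0, 0, 0, 0, 0, 2, 3, 0, 0;
    0, 0, 0, 0, 0, 0, 0, 0, 0, 0, 0, 1, 2, 0;
    0, 0, 0, 0, 0, 0, 0, 0, 0, 0, -1, 0, 0, 2]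

def matBCongrDiag : Fin 14 → ℤ := ![-6, 6, 6, 6, 6, 6, 6, 6, 6, 6, -1, 1, 3, -3]

def matBIsotropic : Fin 14 → ℤ := ![3, -2, 4, -6, 5, -4, 3, -2, 1, 0, 0, 0, 0, 0]

theorem transpose_matBCongr_mul_diagonal_mul :
    matBCongrᵀ * diagonal matBCongrDiag * matBCongr = (6 : ℤ) • matB 0 := by
  decide

theorem isLowerTriangular_matBCongr : matBCongr.IsLowerTriangular := by
  decide +kernel

theorem det_matBCongr : matBCongr.det = 12 := by
  rw [det_of_isLowerTriangular _ isLowerTriangular_matBCongr]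
  decide +kernel

theorem matB_zero_mulVec_isotropic : matB 0 *ᵥ matBIsotropic = Pi.single 9 1 := by
  decide

theorem matB_eq_add_single (n : ℤ) : matB n = matB 0 + single 9 9 n := by
  ext i j
  by_cases hij : i = j
  · subst hij
    fin_cases i <;> simp [matB, sub_eq_neg_add]
  · simp [matB, hij, single_apply_of_ne _ _ _ _ _ fun h => hij (h.1.symm.trans h.2)]

theorem transpose_matB (n : ℤ) : (matB n)ᵀ = matB n := by
  ext i j
  rcases eq_or_ne i j with rfl | h
  · rfl
  · simp only [transpose_apply, matB, of_apply, h, h.symm, if_false, min_comm j, max_comm j]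

theorem matB_zero_map_eq_transpose_mul_diagonal_mul :
    (matB 0).map (Int.cast : ℤ → ℝ) = (matBCongr.map Int.cast)ᵀ *
      diagonal (fun i => (matBCongrDiag i : ℝ) / 6) * matBCongr.map Int.cast := by
  let f := Int.castRingHom ℝ
  have h6 := congrArg (Matrix.map · f) transpose_matBCongr_mul_diagonal_mul
  simp only [Matrix.map_mul, transpose_map, diagonal_map (map_zero f),
    Matrix.map_smul _ _ (map_zsmul f 6)] at h6
  simp only [f, Int.coe_castRingHom] at h6
  have hd : diagonal (fun i => (matBCongrDiag i : ℝ) / 6) =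
      (6 : ℝ)⁻¹ • diagonal (fun i => (matBCongrDiag i : ℝ)) := by
    rw [← diagonal_smul]
    congr 1
    ext i
    simp [div_eq_inv_mul]
  rw [hd, Matrix.mul_smul, Matrix.smul_mul, h6]
  module

theorem isUnit_matBCongr_map : IsUnit (matBCongr.map (Int.cast : ℤ → ℝ)) := by
  rw [isUnit_iff_isUnit_det, ← Int.cast_det, det_matBCongr]
  norm_num

theorem matB_zero_map_mulVec_isotropic :
    (matB 0).map (Int.cast : ℤ → ℝ) *ᵥ (Int.cast ∘ matBIsotropic) = Pi.single 9 1 := by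
  ext i
  refine (RingHom.map_mulVec (Int.castRingHom ℝ) _ _ i).symm.trans ?_
  rw [matB_zero_mulVec_isotropic]
  simp [Pi.single_apply, apply_ite]

theorem matB_map_eq_add (n : ℤ) :
    (matB n).map (Int.cast : ℤ → ℝ) =
      (matB 0).map Int.cast + (n : ℝ) • vecMulVec (Pi.single 9 1) (Pi.single 9 1) := by
  rw [matB_eq_add_single, Matrix.map_add _ Int.cast_add, ← single_eq_single_vecMulVec_single,
    smul_single, smul_eq_mul, mul_one]
  congr 1
  ext i j
  by_cases h : 9 = i ∧ 9 = j
  · obtain ⟨rfl, rfl⟩ := h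
    simp
  · simp [single_apply_of_ne _ _ _ _ _ h]

theorem matB_map_eq_transpose_mul_diagonal_mul (n : ℤ) :
    ∃ P : Matrix (Fin 14) (Fin 14) ℝ, IsUnit P ∧
      (matB n).map (Int.cast : ℤ → ℝ) = Pᵀ * diagonal (fun i => (matBCongrDiag i : ℝ) / 6) * P := by
  set k : Fin 14 → ℝ := Int.cast ∘ matBIsotropic
  set e : Fin 14 → ℝ := Pi.single 9 1
  have hek : e ⬝ᵥ k = 0 := by simp [e, k, matBIsotropic]
  have hsymm : ((matB 0).map (Int.cast : ℤ → ℝ))ᵀ = (matB 0).map Int.cast := by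
    rw [← transpose_map, transpose_matB]
  have hk : (matB 0).map (Int.cast : ℤ → ℝ) *ᵥ k = (1 : ℝ) • e := by
    rw [one_smul]
    exact matB_zero_map_mulVec_isotropic
  have hshift := transpose_mul_mul_one_add_smul_vecMulVec hsymm hk hek ((n : ℝ) / 2)
  rw [show 2 * ((n : ℝ) / 2) * 1 = n by ring, matB_zero_map_eq_transpose_mul_diagonal_mul] at hshift
  refine ⟨matBCongr.map Int.cast * (1 + ((n : ℝ) / 2) • vecMulVec k e),
    isUnit_matBCongr_map.mul (isUnit_one_add_smul_vecMulVec hek _), ?_⟩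
  rw [matB_map_eq_add, matB_zero_map_eq_transpose_mul_diagonal_mul, ← hshift]
  simp only [transpose_mul, Matrix.mul_assoc]

/-- For every integer n, the real symmetric matrix B(n) has exactly 11 positive
and exactly 3 negative eigenvalues (counted with multiplicity), so its
signature (index) is 8. -/
theorem matB_signature_eight (n : ℤ)
    (hB : ((matB n).map (Int.cast : ℤ → ℝ)).IsHermitian) :
    (Finset.univ.filter fun i => 0 < hB.eigenvalues i).card = 11 ∧
    (Finset.univ.filter fun i => hB.eigenvalues i < 0).card = 3 := by
  obtain ⟨P, hP, hBP⟩ := matB_map_eq_transpose_mul_diagonal_mul n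
  rw [hB.card_eigenvalues_pos_eq hP hBP, hB.card_eigenvalues_neg_eq hP hBP]
  simp only [lt_div_iff₀ (by norm_num : (0 : ℝ) < 6), div_lt_iff₀ (by norm_num : (0 : ℝ) < 6),
    zero_mul, Int.cast_pos, Int.cast_lt_zero]
  decide
end
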